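/- Consider the star with ℓ leaves and diameter 2d (each leaf connected to the center by a path of length d), and let t be the number of categories containing the center in a good system of categories. Then t ln t ≥ d ln ℓ / 32. -/

import Mathlib

open Finset SimpleGraph

variable {V : Type*}

def catDist [DecidableEq V] (S : Finset (Finset V)) (s t : V) : ℕ :=
  (S.filter fun C => t ∈ C ∧ s ∉ C).card

def IsGoodSystem [DecidableEq V] (G : SimpleGraph V) (S : Finset (Finset V)) : Prop :=
  (∀ C ∈ S, (G.induce (C : Set V)).Connected) ∧
    ∀ s t : V, s ≠ t → ∃ u, G.Adj s u ∧ catDist S u t < catDist S s t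

def memdim [DecidableEq V] [Fintype V] (S : Finset (Finset V)) : ℕ :=
  univ.sup fun v : V => (S.filter fun C => v ∈ C).card

noncomputable def graphDiam [Fintype V] (G : SimpleGraph V) : ℕ :=
  univ.sup fun p : V × V => G.dist p.1 p.2

noncomputable def minMemdim (V : Type*) [DecidableEq V] [Fintype V] (G : SimpleGraph V) : ℕ :=
  sInf {m | ∃ S : Finset (Finset V), IsGoodSystem G S ∧ memdim S = m}

def longStarAdj (ℓ d : ℕ) : Option (Fin ℓ × Fin d) → Option (Fin ℓ × Fin d) → Prop
  | none, none => False
  | none, some (_, k) => k.val = 0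
  | some (_, k), none => k.val = 0
  | some (i, j), some (i', k) => i = i' ∧ (j.val + 1 = k.val ∨ k.val + 1 = j.val)

def longStar (ℓ d : ℕ) : SimpleGraph (Option (Fin ℓ × Fin d)) where
  Adj := longStarAdj ℓ d
  symm := by
    constructor
    rintro (_ | ⟨i, j⟩) (_ | ⟨i', k⟩) h <;> simp_all [longStarAdj]
    omega
  loopless := by
    constructor
    rintro (_ | ⟨i, j⟩) h <;> simp_all [longStarAdj]

/-!
A category through the centre is connected, so it meets every arm in an initial segment and has
a depth on each arm. For a level `k < d` and arms `i ≠ j`, the good-system condition for the pair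
of level-`k` vertices on arms `i` and `j` yields a central category of depth exactly `k` on arm `i`
and depth `> k` on arm `j`. So for each `k` the sets `A k i` of central categories of depth `k`
on arm `i` form an injective family of `ℓ` subsets of the `t` central categories. At most
`(t + 1) ^ w` of them have size `≤ w`, so their sizes add up to about `w ℓ` with
`w ≈ log ℓ / log t`; but each category has one depth per arm, so summed over all levels these
sizes are at most `t ℓ`. This gives `d log ℓ ≲ t log t`.
-/

namespace Finset

variable {α : Type*}

theorem card_powerset_filter_card_le (T : Finset α) (w : ℕ) :
    #{s ∈ T.powerset | #s ≤ w} ≤ (#T + 1) ^ w := by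
  classical
  calc #{s ∈ T.powerset | #s ≤ w} ≤ #((range (w + 1)).biUnion fun m ↦ T.powersetCard m) :=
        card_le_card fun s hs ↦ by
          simp only [mem_filter, mem_powerset] at hs
          simp only [mem_biUnion, mem_range, mem_powersetCard]
          exact ⟨#s, by omega, hs.1, rfl⟩
    _ ≤ ∑ m ∈ range (w + 1), (#T).choose m :=
        card_biUnion_le.trans_eq (sum_congr rfl fun m _ ↦ card_powersetCard m T)
    _ ≤ ∑ m ∈ range (w + 1), #T ^ m * 1 ^ (w - m) * w.choose m := by
        gcongr with m hm
        rw [one_pow, mul_one]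
        exact (Nat.choose_le_pow _ _).trans
          (Nat.le_mul_of_pos_right _ (Nat.choose_pos (Nat.lt_succ_iff.1 (mem_range.1 hm))))
    _ = (#T + 1) ^ w := (add_pow _ _ _).symm

theorem mul_card_le_mul_pow_add_sum_card {ι : Type*} [Fintype ι] {T : Finset α}
    {A : ι → Finset α} (hA : ∀ i, A i ⊆ T) (hinj : Function.Injective A) (w : ℕ) :
    (w + 1) * Fintype.card ι ≤ (w + 1) * (#T + 1) ^ w + ∑ i, #(A i) := by
  classical
  have hsmall : #{i | #(A i) ≤ w} ≤ (#T + 1) ^ w :=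
    (card_le_card_of_injOn A (fun i hi ↦ by simpa using ⟨hA i, (mem_filter.1 hi).2⟩)
      hinj.injOn).trans (card_powerset_filter_card_le T w)
  have hlarge : (w + 1) * #{i | ¬#(A i) ≤ w} ≤ ∑ i, #(A i) :=
    calc (w + 1) * #{i | ¬#(A i) ≤ w} = ∑ i ∈ {i | ¬#(A i) ≤ w}, (w + 1) := by
          rw [sum_const, smul_eq_mul, mul_comm]
      _ ≤ ∑ i ∈ {i | ¬#(A i) ≤ w}, #(A i) :=
          sum_le_sum fun i hi ↦ by simpa using (mem_filter.1 hi).2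
      _ ≤ ∑ i, #(A i) := sum_le_sum_of_subset (filter_subset _ _)
  have hsplit := card_filter_add_card_filter_not (s := univ) (fun i ↦ #(A i) ≤ w)
  rw [card_univ] at hsplit
  rw [← hsplit, mul_add]
  gcongr

theorem sum_card_filter_eq_le (s : Finset α) (f : α → ℕ) (n : ℕ) :
    ∑ k : Fin n, #{a ∈ s | f a = k} ≤ #s := by
  rw [Fin.sum_univ_eq_sum_range (fun k ↦ #{a ∈ s | f a = k}), sum_card_fiberwise_eq_card_filter]
  exact card_filter_le _ _

end Finset

theorem Nat.exists_le_pow_of_forall_mul_le {ℓ d t : ℕ} (hℓ : 2 ≤ ℓ) (ht : 2 ≤ t)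
    (h : ∀ w, (w + 1) * (d * ℓ) ≤ d * ((w + 1) * (t + 1) ^ w) + t * ℓ) :
    ∃ e, ℓ ≤ t ^ e ∧ d * e ≤ 6 * t := by
  have hlow := Nat.pow_log_le_self (t + 1) (show ℓ / 2 ≠ 0 by omega)
  have hhigh := Nat.lt_pow_succ_log_self (show 1 < t + 1 by omega) (ℓ / 2)
  generalize Nat.log (t + 1) (ℓ / 2) = w at hlow hhigh
  rw [Nat.succ_eq_add_one] at hhigh
  have hwd : (w + 1) * d ≤ 2 * t := by
    refine le_of_mul_le_mul_right (a := ℓ) ?_ (by omega)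
    have := Nat.mul_le_mul_left ((w + 1) * d) (show 2 * (t + 1) ^ w ≤ ℓ by omega)
    nlinarith [h w]
  refine ⟨2 * w + 3, ?_, by nlinarith⟩
  calc ℓ ≤ 2 * (t + 1) ^ (w + 1) := by omega
    _ ≤ t * (t ^ 2) ^ (w + 1) := by gcongr; nlinarith
    _ = t ^ (2 * w + 3) := by ring

namespace LongStar

variable {ℓ d : ℕ}

theorem adj_some_iff {i : Fin ℓ} {k : Fin d} {u : Option (Fin ℓ × Fin d)} :
    (longStar ℓ d).Adj (some (i, k)) u ↔
      (u = none ∧ k.val = 0) ∨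
        ∃ k' : Fin d, u = some (i, k') ∧ (k.val + 1 = k' ∨ k'.val + 1 = k) := by
  rcases u with _ | ⟨i', k'⟩
  · simp [longStar, longStarAdj]
  · simp only [longStar, longStarAdj, reduceCtorEq, false_and, Option.some.injEq, Prod.mk.injEq,
      false_or]
    constructor
    · rintro ⟨rfl, h⟩; exact ⟨k', ⟨rfl, rfl⟩, h⟩
    · rintro ⟨_, ⟨rfl, rfl⟩, h⟩; exact ⟨rfl, h⟩

theorem mem_support_of_walk {x y : Option (Fin ℓ × Fin d)} (p : (longStar ℓ d).Walk x y)
    {i : Fin ℓ} (hy : ∀ b, y ≠ some (i, b)) :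
    ∀ {a : Fin d}, x = some (i, a) → none ∈ p.support ∧ ∀ m ≤ a, some (i, m) ∈ p.support := by
  induction p with
  | nil => exact fun {a} ha ↦ absurd ha (hy a)
  | @cons x u y hadj p ih =>
    rintro a rfl
    have hhead : ∀ m ≤ a, a ≤ m → some (i, m) ∈ (p.cons hadj).support := fun m h₁ h₂ ↦ by
      simp [le_antisymm h₁ h₂]
    rcases adj_some_iff.1 hadj with ⟨rfl, ha⟩ | ⟨k, rfl, hk⟩
    · exact ⟨by simp, fun m hm ↦ hhead m hm (by simp [Fin.le_def, ha])⟩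
    · obtain ⟨hnone, harm⟩ := ih hy rfl
      refine ⟨List.mem_cons_of_mem _ hnone, fun m hm ↦ ?_⟩
      by_cases hmk : m ≤ k
      · exact List.mem_cons_of_mem _ (harm m hmk)
      · exact hhead m hm (by rw [Fin.le_def] at hm hmk ⊢; omega)

theorem mem_of_connected {C : Finset (Option (Fin ℓ × Fin d))}
    (hC : ((longStar ℓ d).induce (C : Set (Option (Fin ℓ × Fin d)))).Connected)
    {i : Fin ℓ} {a : Fin d} (ha : some (i, a) ∈ C) {y : Option (Fin ℓ × Fin d)} (hy : y ∈ C)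
    (hy' : ∀ b, y ≠ some (i, b)) :
    none ∈ C ∧ ∀ m ≤ a, some (i, m) ∈ C := by
  obtain ⟨p⟩ := hC.preconnected ⟨_, ha⟩ ⟨y, hy⟩
  have hsupp : ∀ v ∈ (p.map (Embedding.induce _).toHom).support, v ∈ C := by
    intro v hv
    rw [Walk.support_map, List.mem_map] at hv
    obtain ⟨x, -, rfl⟩ := hv
    exact x.prop
  obtain ⟨hnone, harm⟩ := mem_support_of_walk (p.map (Embedding.induce _).toHom) hy' rfl
  exact ⟨hsupp _ hnone, fun m hm ↦ hsupp _ (harm m hm)⟩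

def depth (C : Finset (Option (Fin ℓ × Fin d))) (i : Fin ℓ) : ℕ :=
  #{m : Fin d | some (i, m) ∈ C}

theorem mem_iff_lt_depth {C : Finset (Option (Fin ℓ × Fin d))}
    (hC : ((longStar ℓ d).induce (C : Set (Option (Fin ℓ × Fin d)))).Connected)
    (hnone : none ∈ C) {i : Fin ℓ} {a : Fin d} :
    some (i, a) ∈ C ↔ a.val < depth C i := by
  constructor
  · intro ha
    calc a.val < #(Iic a) := by simp
      _ ≤ depth C i := card_le_card fun m hm ↦
        mem_filter.2 ⟨mem_univ _, (mem_of_connected hC ha hnone (by simp)).2 m (mem_Iic.1 hm)⟩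
  · intro hlt
    by_contra ha
    have hsub : ({m : Fin d | some (i, m) ∈ C} : Finset _) ⊆ Iio a := fun m hm ↦ by
      refine mem_Iio.2 (lt_of_not_ge fun ham ↦ ha ?_)
      exact (mem_of_connected hC (mem_filter.1 hm).2 hnone (by simp)).2 a ham
    exact (card_le_card hsub).not_gt (by simpa [depth] using hlt)

theorem exists_depth_eq_lt_depth {S : Finset (Finset (Option (Fin ℓ × Fin d)))}
    (hS : IsGoodSystem (longStar ℓ d) S) {i j : Fin ℓ} (hij : i ≠ j) (k : Fin d) :
    ∃ C ∈ S, none ∈ C ∧ depth C i = k ∧ k.val < depth C j := by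
  obtain ⟨u, hadj, hlt⟩ := hS.2 (some (i, k)) (some (j, k)) (by simp [hij])
  obtain ⟨C, hC, hCu⟩ := exists_mem_notMem_of_card_lt_card hlt
  simp only [mem_filter, not_and, not_not] at hC hCu
  obtain ⟨hCS, hj, hi⟩ := hC
  have hu : u ∈ C := hCu hCS hj
  have hconn := hS.1 C hCS
  have hnone : none ∈ C := by
    rcases adj_some_iff.1 hadj with ⟨rfl, -⟩ | ⟨k', rfl, -⟩
    · exact hu
    · exact (mem_of_connected hconn hu hj (by simp [hij.symm])).1
  rw [mem_iff_lt_depth hconn hnone] at hi hj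
  refine ⟨C, hCS, hnone, le_antisymm (not_lt.1 hi) ?_, hj⟩
  rcases adj_some_iff.1 hadj with ⟨-, hk⟩ | ⟨k', rfl, hk⟩
  · omega
  · have := (mem_iff_lt_depth hconn hnone).1 hu
    omega

theorem two_le_card_filter_mem_none {S : Finset (Finset (Option (Fin ℓ × Fin d)))}
    (hS : IsGoodSystem (longStar ℓ d) S) (hℓ : 2 ≤ ℓ) (hd : 1 ≤ d) :
    2 ≤ #{C ∈ S | none ∈ C} := by
  have hij : (⟨0, by omega⟩ : Fin ℓ) ≠ ⟨1, hℓ⟩ := by simp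
  obtain ⟨C, hC, hCn, hCi, -⟩ := exists_depth_eq_lt_depth hS hij ⟨0, hd⟩
  obtain ⟨C', hC', hC'n, -, hC'i⟩ := exists_depth_eq_lt_depth hS hij.symm ⟨0, hd⟩
  refine one_lt_card.2 ⟨C, mem_filter.2 ⟨hC, hCn⟩, C', mem_filter.2 ⟨hC', hC'n⟩, ?_⟩
  rintro rfl
  simp only at hCi hC'i
  omega

theorem succ_mul_mul_le_of_isGoodSystem {S : Finset (Finset (Option (Fin ℓ × Fin d)))}
    (hS : IsGoodSystem (longStar ℓ d) S) (w : ℕ) :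
    (w + 1) * (d * ℓ) ≤
      d * ((w + 1) * (#{C ∈ S | none ∈ C} + 1) ^ w) + #{C ∈ S | none ∈ C} * ℓ := by
  set T := {C ∈ S | none ∈ C}
  let A : Fin d → Fin ℓ → Finset (Finset (Option (Fin ℓ × Fin d))) :=
    fun k i ↦ {C ∈ T | depth C i = k}
  have hinj (k : Fin d) : Function.Injective (A k) := by
    intro i j hA
    by_contra hij
    obtain ⟨C, hCS, hCn, hi, hj⟩ := exists_depth_eq_lt_depth hS hij k
    have hC : C ∈ A k i := by simp [A, T, hCS, hCn, hi]
    rw [hA] at hC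
    simp only [A, mem_filter] at hC
    omega
  have hlevel (k : Fin d) : (w + 1) * ℓ ≤ (w + 1) * (#T + 1) ^ w + ∑ i, #(A k i) := by
    simpa using mul_card_le_mul_pow_add_sum_card (fun i ↦ filter_subset _ T) (hinj k) w
  have harm (i : Fin ℓ) : ∑ k, #(A k i) ≤ #T := sum_card_filter_eq_le T (depth · i) d
  calc (w + 1) * (d * ℓ) = ∑ _k : Fin d, (w + 1) * ℓ := by
        rw [sum_const, card_univ, Fintype.card_fin, smul_eq_mul]; ring
    _ ≤ ∑ k : Fin d, ((w + 1) * (#T + 1) ^ w + ∑ i, #(A k i)) := sum_le_sum fun k _ ↦ hlevel k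
    _ = d * ((w + 1) * (#T + 1) ^ w) + ∑ i, ∑ k, #(A k i) := by
        rw [sum_add_distrib, sum_comm]; simp
    _ ≤ d * ((w + 1) * (#T + 1) ^ w) + #T * ℓ := by
        grw [sum_le_sum fun i _ ↦ harm i]; simp [mul_comm]

end LongStar

theorem stmt15 (ℓ d : ℕ) (hℓ : 2 ≤ ℓ) (hd : 1 ≤ d)
    (S : Finset (Finset (Option (Fin ℓ × Fin d))))
    (hS : IsGoodSystem (longStar ℓ d) S) :
    (d : ℝ) * Real.log ℓ / 32 ≤
      ((S.filter fun C => (none : Option (Fin ℓ × Fin d)) ∈ C).card : ℝ) *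
        Real.log ((S.filter fun C => (none : Option (Fin ℓ × Fin d)) ∈ C).card) := by
  set t := #{C ∈ S | none ∈ C}
  have ht : 2 ≤ t := LongStar.two_le_card_filter_mem_none hS hℓ hd
  obtain ⟨e, hℓe, hde⟩ :=
    Nat.exists_le_pow_of_forall_mul_le hℓ ht (LongStar.succ_mul_mul_le_of_isGoodSystem hS)
  have hlogt : 0 ≤ Real.log t := Real.log_nonneg (by exact_mod_cast (by omega : 1 ≤ t))
  have hlogℓ : Real.log ℓ ≤ e * Real.log t := by
    rw [← Real.log_pow]
    exact Real.log_le_log (by positivity) (by exact_mod_cast hℓe)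
  calc (d : ℝ) * Real.log ℓ / 32 ≤ (d * e : ℕ) * Real.log t / 32 := by
        push_cast; rw [mul_assoc]; gcongr
    _ ≤ (6 * t : ℕ) * Real.log t / 32 := by gcongr
    _ ≤ t * Real.log t := by push_cast; nlinarith
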